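/- arXiv:0712.1576 — 12 statements merged into one kernel-verified Lean document; each statement's English description precedes it below -/
import Mathlib

section
/- Let S be a symmetric r×r rational matrix whose off-diagonal entries are nonnegative. If x', x'' ∈ ℚ^r are vectors with nonnegative entries satisfying S x' ≥ 0 and S x'' ≥ 0 componentwise, then the componentwise maximum x (with xᵢ = max(x'ᵢ, x''ᵢ)) also satisfies S x ≥ 0 componentwise. -/
/-! At a coordinate `i` with `x'' i ≤ x' i`, the maximum agrees with `x'` at `i` and dominates it
elsewhere, so nonnegativity of the off-diagonal entries gives `(S *ᵥ max) i ≥ (S *ᵥ x') i ≥ 0`. -/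

open Matrix

theorem Matrix.mulVec_apply_le_mulVec_apply_of_offDiag_nonneg {ι R : Type*} [Fintype ι]
    [Semiring R] [PartialOrder R] [IsOrderedRing R] {A : Matrix ι ι R}
    (hoff : ∀ i j, i ≠ j → 0 ≤ A i j) {x y : ι → R} (hxy : x ≤ y) {i : ι} (hi : x i = y i) :
    (A *ᵥ x) i ≤ (A *ᵥ y) i := by
  refine Finset.sum_le_sum fun j _ => ?_
  obtain rfl | hij := eq_or_ne i j
  · rw [hi]
  · exact mul_le_mul_of_nonneg_left (hxy j) (hoff i j hij)

theorem stmt1_general (r : ℕ) (S : Matrix (Fin r) (Fin r) ℚ)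
    (hoff : ∀ i j : Fin r, i ≠ j → 0 ≤ S i j)
    (x' x'' : Fin r → ℚ)
    (h' : 0 ≤ S.mulVec x') (h'' : 0 ≤ S.mulVec x'') :
    0 ≤ S.mulVec (fun i => max (x' i) (x'' i)) := by
  intro i
  rcases le_total (x'' i) (x' i) with h | h
  · exact (h' i).trans <| mulVec_apply_le_mulVec_apply_of_offDiag_nonneg hoff
      (fun j => le_max_left _ _) (max_eq_left h).symm
  · exact (h'' i).trans <| mulVec_apply_le_mulVec_apply_of_offDiag_nonneg hoff
      (fun j => le_max_right _ _) (max_eq_right h).symm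

theorem stmt1 (r : ℕ) (S : Matrix (Fin r) (Fin r) ℚ)
    (hsym : S.IsSymm) (hoff : ∀ i j : Fin r, i ≠ j → 0 ≤ S i j)
    (x' x'' : Fin r → ℚ)
    (hx' : 0 ≤ x') (hx'' : 0 ≤ x'')
    (h' : 0 ≤ S.mulVec x') (h'' : 0 ≤ S.mulVec x'') :
    0 ≤ S.mulVec (fun i => max (x' i) (x'' i)) :=
  stmt1_general r S hoff x' x'' h' h''
end

section
/- Let S be a symmetric r×r real matrix with nonnegative off-diagonal entries and suppose the associated quadratic form is negative definite. If q ∈ ℝ^r has nonnegative entries and (S q)ⱼ ≥ 0 for every j, then q = 0. -/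
open Matrix

theorem stmt2_general (r : ℕ) (S : Matrix (Fin r) (Fin r) ℝ)
    (hnd : ∀ x : Fin r → ℝ, x ≠ 0 → x ⬝ᵥ S.mulVec x < 0)
    (q : Fin r → ℝ) (hq : ∀ i, 0 ≤ q i) (hSq : ∀ j, 0 ≤ S.mulVec q j) :
    q = 0 := by
  by_contra hq_ne
  have h_nonneg : 0 ≤ q ⬝ᵥ S.mulVec q := dotProduct_nonneg_of_nonneg hq hSq
  exact (hnd q hq_ne).not_ge h_nonneg

theorem stmt2 (r : ℕ) (S : Matrix (Fin r) (Fin r) ℝ)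
    (hsym : S.IsSymm) (hoff : ∀ i j : Fin r, i ≠ j → 0 ≤ S i j)
    (hnd : ∀ x : Fin r → ℝ, x ≠ 0 → x ⬝ᵥ S.mulVec x < 0)
    (q : Fin r → ℝ) (hq : ∀ i, 0 ≤ q i) (hSq : ∀ j, 0 ≤ S.mulVec q j) :
    q = 0 :=
  stmt2_general r S hnd q hq hSq
end

section
/- Let S be a symmetric r×r real matrix with nonnegative off-diagonal entries. Write any x ∈ ℝ^r as x = x⁺ − x⁻ with x⁺ᵢ = max(xᵢ,0) and x⁻ᵢ = max(−xᵢ,0). If xᵀ S x > 0, then (x⁺)ᵀ S x⁺ > 0 or (x⁻)ᵀ S x⁻ > 0. -/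
/-!
Split `x = x⁺ - x⁻`. The cross terms `x⁺ ⬝ᵥ S *ᵥ x⁻` and `x⁻ ⬝ᵥ S *ᵥ x⁺` are nonnegative:
the diagonal of `S` only pairs `x⁺ i` with `x⁻ i`, one of which vanishes, and every off-diagonal
summand is a product of nonnegative numbers. Hence `xᵀ S x ≤ (x⁺)ᵀ S x⁺ + (x⁻)ᵀ S x⁻`.
-/

open Matrix

variable {n R : Type*} [Fintype n] [Ring R] [LinearOrder R] [IsOrderedRing R]
  {S : Matrix n n R}

theorem Matrix.dotProduct_mulVec_nonneg_of_inf_eq_zero (hS : ∀ i j, i ≠ j → 0 ≤ S i j)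
    {u v : n → R} (huv : u ⊓ v = 0) : 0 ≤ u ⬝ᵥ S *ᵥ v := by
  have hu : 0 ≤ u := huv ▸ inf_le_left
  have hv : 0 ≤ v := huv ▸ inf_le_right
  refine Finset.sum_nonneg fun i _ => ?_
  rw [mulVec, dotProduct, Finset.mul_sum]
  refine Finset.sum_nonneg fun j _ => ?_
  by_cases hij : i = j
  · subst hij
    rcases min_eq_iff.mp (congrFun huv i) with ⟨hui, -⟩ | ⟨hvi, -⟩
    · simp [hui]
    · simp [hvi]
  · exact mul_nonneg (hu i) (mul_nonneg (hS i j hij) (hv j))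

theorem Matrix.dotProduct_mulVec_le_posPart_add_negPart (hS : ∀ i j, i ≠ j → 0 ≤ S i j)
    (x : n → R) : x ⬝ᵥ S *ᵥ x ≤ x⁺ ⬝ᵥ S *ᵥ x⁺ + x⁻ ⬝ᵥ S *ᵥ x⁻ := by
  have hpn := dotProduct_mulVec_nonneg_of_inf_eq_zero hS (posPart_inf_negPart_eq_zero x)
  have hnp := dotProduct_mulVec_nonneg_of_inf_eq_zero hS
    ((inf_comm _ _).trans (posPart_inf_negPart_eq_zero x))
  conv_lhs => rw [← posPart_sub_negPart x]
  rw [mulVec_sub, dotProduct_sub, sub_dotProduct, sub_dotProduct, sub_sub_sub_eq]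
  exact sub_le_self _ (add_nonneg hnp hpn)

theorem stmt5_general (r : ℕ) (S : Matrix (Fin r) (Fin r) ℝ)
    (hoff : ∀ i j : Fin r, i ≠ j → 0 ≤ S i j)
    (x : Fin r → ℝ) (hx : 0 < x ⬝ᵥ S.mulVec x) :
    0 < (fun i => max (x i) 0) ⬝ᵥ S.mulVec (fun i => max (x i) 0) ∨
    0 < (fun i => max (-x i) 0) ⬝ᵥ S.mulVec (fun i => max (-x i) 0) := by
  by_contra! h
  exact (hx.trans_le (dotProduct_mulVec_le_posPart_add_negPart hoff x)).not_ge
    (add_nonpos h.1 h.2)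

theorem stmt5 (r : ℕ) (S : Matrix (Fin r) (Fin r) ℝ)
    (hsym : S.IsSymm) (hoff : ∀ i j : Fin r, i ≠ j → 0 ≤ S i j)
    (x : Fin r → ℝ) (hx : 0 < x ⬝ᵥ S.mulVec x) :
    0 < (fun i => max (x i) 0) ⬝ᵥ S.mulVec (fun i => max (x i) 0) ∨
    0 < (fun i => max (-x i) 0) ⬝ᵥ S.mulVec (fun i => max (-x i) 0) :=
  stmt5_general r S hoff x hx
end

section
/- Let S be a symmetric r×r real matrix with nonnegative off-diagonal entries, negative semidefinite but not negative definite. Then there exists a nonzero vector e ∈ ℝ^r with nonnegative entries such that S e = 0 (in particular (S e)ⱼ ≥ 0 for all j). -/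
/-!
Let `y ≠ 0` with `yᵀ S y = 0`. Since the off-diagonal entries of `S` are nonnegative, replacing
`y` by `|y|` can only increase the quadratic form, so `|y|ᵀ S |y| ≥ 0`, hence `= 0` by negative
semidefiniteness. For the positive semidefinite matrix `-S`, a vector on which the quadratic form
vanishes lies in the kernel, so `e = |y|` works.
-/

open Matrix

namespace Matrix

variable {n R : Type*} [Fintype n]

theorem dotProduct_mulVec_le_abs [CommRing R] [LinearOrder R] [IsStrictOrderedRing R]
    {S : Matrix n n R} (hoff : ∀ i j, i ≠ j → 0 ≤ S i j) (y : n → R) :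
    y ⬝ᵥ S *ᵥ y ≤ |y| ⬝ᵥ S *ᵥ |y| := by
  simp only [dotProduct, mulVec, Finset.mul_sum, Pi.abs_apply]
  refine Finset.sum_le_sum fun i _ => Finset.sum_le_sum fun j _ => ?_
  rcases eq_or_ne i j with rfl | hij
  · exact le_of_eq (by linear_combination (-S i i) * abs_mul_abs_self (y i))
  · have hy : y i * y j ≤ |y i| * |y j| := abs_mul (y i) (y j) ▸ le_abs_self _
    nlinarith [hoff i j hij]

theorem mulVec_eq_zero_of_dotProduct_mulVec_eq_zero {S : Matrix n n ℝ} (hsym : S.IsSymm)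
    (hnsd : ∀ x, x ⬝ᵥ S *ᵥ x ≤ 0) {x : n → ℝ} (hx : x ⬝ᵥ S *ᵥ x = 0) : S *ᵥ x = 0 := by
  have hpsd : (-S).PosSemidef :=
    .of_dotProduct_mulVec_nonneg (isHermitian_iff_isSymm.mpr hsym.neg) fun x => by
      simpa [neg_mulVec] using hnsd x
  have := (hpsd.dotProduct_mulVec_zero_iff x).mp (by simp [neg_mulVec, hx])
  rwa [neg_mulVec, neg_eq_zero] at this

end Matrix

theorem stmt6 (r : ℕ) (S : Matrix (Fin r) (Fin r) ℝ)
    (hsym : S.IsSymm) (hoff : ∀ i j : Fin r, i ≠ j → 0 ≤ S i j)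
    (hnsd : ∀ x : Fin r → ℝ, x ⬝ᵥ S.mulVec x ≤ 0)
    (hnnd : ∃ y : Fin r → ℝ, y ≠ 0 ∧ y ⬝ᵥ S.mulVec y = 0) :
    ∃ e : Fin r → ℝ, e ≠ 0 ∧ (∀ i, 0 ≤ e i) ∧ S.mulVec e = 0 := by
  obtain ⟨y, hy0, hyq⟩ := hnnd
  have habs : |y| ⬝ᵥ S *ᵥ |y| = 0 :=
    le_antisymm (hnsd _) (hyq ▸ dotProduct_mulVec_le_abs hoff y)
  exact ⟨|y|, (Pi.abs_eq_zero y).not.mpr hy0, fun i => abs_nonneg (y i),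
    mulVec_eq_zero_of_dotProduct_mulVec_eq_zero hsym hnsd habs⟩
end

section
/- Let S be a symmetric r×r rational matrix with nonnegative off-diagonal entries, and let a ∈ ℚ^r with aᵢ > 0. Then the set K = { x ∈ ℚ^r : 0 ≤ xᵢ ≤ aᵢ for all i, and (S x)ⱼ ≥ 0 for all j } has a greatest element with respect to the componentwise partial order ≤. -/
open Matrix Filter Topology

/-!
Over `ℝ` the constraint set is a compact polytope, and it is closed under componentwise maximum:
a row of `S x ≥ 0` only involves one coordinate with a possibly negative coefficient, and that
coordinate of `x ⊔ y` is attained by `x` or by `y`. Hence a maximizer `m` of `∑ i, x i` is its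
greatest element. To see that `m` is rational, take a `ℚ`-linear `ψ : ℝ → ℚ` with `ψ 1 = 1`.
The point `ψ ∘ m` satisfies every constraint that is tight at `m`, so `m` stays in the polytope
when moved slightly towards `ψ ∘ m` or away from it; since `m` is greatest, `ψ ∘ m = m`.
-/

variable {ι : Type*} [Fintype ι]

def nefSubdivisors {R : Type*} [Semiring R] [PartialOrder R] (S : Matrix ι ι R) (a : ι → R) :
    Set (ι → R) :=
  {x | (∀ i, 0 ≤ x i ∧ x i ≤ a i) ∧ ∀ j, 0 ≤ (S *ᵥ x) j}

theorem zero_mem_nefSubdivisors {R : Type*} [Semiring R] [PartialOrder R] {S : Matrix ι ι R}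
    {a : ι → R} (ha : 0 ≤ a) : 0 ∈ nefSubdivisors S a :=
  ⟨fun i => ⟨le_rfl, ha i⟩, fun j => by simp⟩

section OrderedRing

variable {R : Type*} [Semiring R] [LinearOrder R] [IsOrderedRing R] {S : Matrix ι ι R} {a : ι → R}

theorem mulVec_apply_le_of_le_of_eq (hoff : ∀ i j, i ≠ j → 0 ≤ S i j) {x z : ι → R}
    (hxz : x ≤ z) {j : ι} (hj : z j = x j) : (S *ᵥ x) j ≤ (S *ᵥ z) j := by
  refine Finset.sum_le_sum fun i _ => ?_
  rcases eq_or_ne i j with rfl | hij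
  · rw [hj]
  · exact mul_le_mul_of_nonneg_left (hxz i) (hoff j i hij.symm)

theorem supClosed_nefSubdivisors (hoff : ∀ i j, i ≠ j → 0 ≤ S i j) :
    SupClosed (nefSubdivisors S a) := by
  intro x hx y hy
  refine ⟨fun i => ⟨le_sup_of_le_left (hx.1 i).1, sup_le (hx.1 i).2 (hy.1 i).2⟩, fun j => ?_⟩
  rcases le_total (y j) (x j) with h | h
  · exact (hx.2 j).trans (mulVec_apply_le_of_le_of_eq hoff le_sup_left (sup_eq_left.mpr h))
  · exact (hy.2 j).trans (mulVec_apply_le_of_le_of_eq hoff le_sup_right (sup_eq_right.mpr h))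

end OrderedRing

theorem SupClosed.isGreatest_of_isMaxOn_sum {R : Type*} [AddCommMonoid R] [LinearOrder R]
    [IsOrderedCancelAddMonoid R] {s : Set (ι → R)} (hs : SupClosed s) {m : ι → R} (hm : m ∈ s)
    (hmax : IsMaxOn (fun x => ∑ i, x i) s m) : IsGreatest s m := by
  refine ⟨hm, fun x hx i => ?_⟩
  have hsum : ∑ i, m i = ∑ i, (x ⊔ m) i :=
    le_antisymm (Finset.sum_le_sum fun i _ => le_sup_right) (hmax (hs hx hm))
  have hxm : (x ⊔ m) i = m i :=
    ((Finset.sum_eq_sum_iff_of_le fun i _ => le_sup_right).mp hsum i (Finset.mem_univ i)).symm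
  exact hxm ▸ le_sup_left

theorem IsGreatest.eq_of_eventually_add_smul_sub_mem {E : Type*} [AddCommGroup E] [PartialOrder E]
    [IsOrderedAddMonoid E] [Module ℝ E] [PosSMulReflectLE ℝ E] {s : Set E} {m y : E}
    (hm : IsGreatest s m) (h : ∀ᶠ t in 𝓝 (0 : ℝ), m + t • (y - m) ∈ s) : y = m := by
  have hneg : ∀ᶠ t in 𝓝 (0 : ℝ), m + (-t) • (y - m) ∈ s :=
    (continuous_neg.tendsto' 0 0 neg_zero).eventually h
  obtain ⟨t, ⟨hpos, hnegt⟩, ht⟩ :=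
    (((h.and hneg).filter_mono nhdsWithin_le_nhds).and self_mem_nhdsWithin :
      ∀ᶠ t in 𝓝[>] (0 : ℝ), _ ∧ t ∈ Set.Ioi 0).exists
  have hle : t • (y - m) ≤ t • 0 := by simpa using hm.2 hpos
  have hge : t • 0 ≤ t • (y - m) := by simpa [neg_smul] using hm.2 hnegt
  exact sub_eq_zero.mp (le_antisymm (le_of_smul_le_smul_left hle ht)
    (le_of_smul_le_smul_left hge ht))

section Real

variable {S : Matrix ι ι ℝ} {a : ι → ℝ}

theorem isCompact_nefSubdivisors : IsCompact (nefSubdivisors S a) := by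
  refine (isCompact_Icc (a := 0) (b := a)).of_isClosed_subset ?_
    fun x hx => ⟨fun i => (hx.1 i).1, fun i => (hx.1 i).2⟩
  simp only [nefSubdivisors, Set.ofPred_and, Set.ofPred_forall]
  exact (isClosed_iInter fun i => (isClosed_le continuous_const (continuous_apply i)).inter
    (isClosed_le (continuous_apply i) continuous_const)).inter
    (isClosed_iInter fun j => isClosed_le continuous_const
      ((continuous_apply j).comp (continuous_const.matrix_mulVec continuous_id)))

theorem exists_isGreatest_nefSubdivisors (hoff : ∀ i j, i ≠ j → 0 ≤ S i j) (ha : 0 ≤ a) :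
    ∃ m, IsGreatest (nefSubdivisors S a) m := by
  obtain ⟨m, hm, hmax⟩ := isCompact_nefSubdivisors.exists_isMaxOn ⟨0, zero_mem_nefSubdivisors ha⟩
    (continuous_finsetSum _ fun i _ => continuous_apply i).continuousOn
  exact ⟨m, (supClosed_nefSubdivisors hoff).isGreatest_of_isMaxOn_sum hm hmax⟩

theorem eventually_le_add_mul_sub {c u v : ℝ} (hu : c ≤ u) (huv : u = c → v = c) :
    ∀ᶠ t in 𝓝 0, c ≤ u + t * (v - u) := by
  rcases hu.eq_or_lt with rfl | hlt
  · simp [huv rfl]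
  · have : Tendsto (fun t : ℝ => u + t * (v - u)) (𝓝 0) (𝓝 u) :=
      (by fun_prop : Continuous fun t : ℝ => u + t * (v - u)).tendsto' 0 u (by simp)
    exact (this.eventually_const_lt hlt).mono fun t => le_of_lt

theorem eventually_add_smul_sub_mem_nefSubdivisors {m y : ι → ℝ} (hm : m ∈ nefSubdivisors S a)
    (h0 : ∀ i, m i = 0 → y i = 0) (ha : ∀ i, m i = a i → y i = a i)
    (hS : ∀ j, (S *ᵥ m) j = 0 → (S *ᵥ y) j = 0) :
    ∀ᶠ t in 𝓝 (0 : ℝ), m + t • (y - m) ∈ nefSubdivisors S a := by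
  have hlow : ∀ i, ∀ᶠ t in 𝓝 (0 : ℝ), 0 ≤ m i + t * (y i - m i) := fun i =>
    eventually_le_add_mul_sub (hm.1 i).1 (h0 i)
  have hup : ∀ i, ∀ᶠ t in 𝓝 (0 : ℝ), m i + t * (y i - m i) ≤ a i := fun i =>
    (eventually_le_add_mul_sub (v := -y i) (neg_le_neg (hm.1 i).2)
      fun h => by simp [ha i (neg_inj.mp h)]).mono fun t ht => by linarith
  have hrow : ∀ j, ∀ᶠ t in 𝓝 (0 : ℝ), 0 ≤ (S *ᵥ m) j + t * ((S *ᵥ y) j - (S *ᵥ m) j) :=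
    fun j => eventually_le_add_mul_sub (hm.2 j) (hS j)
  filter_upwards [eventually_all.mpr hlow, eventually_all.mpr hup, eventually_all.mpr hrow]
    with t hl hu hr
  refine ⟨fun i => ⟨by simpa using hl i, by simpa using hu i⟩, fun j => ?_⟩
  simpa [mulVec_add, mulVec_smul, mulVec_sub] using hr j

end Real

theorem LinearMap.map_mulVec_map_algebraMap {K A ι' : Type*} [CommSemiring K] [Semiring A]
    [Algebra K A] (ψ : A →ₗ[K] K) (M : Matrix ι' ι K) (v : ι → A) (j : ι') :
    ψ ((M.map (algebraMap K A) *ᵥ v) j) = (M *ᵥ (ψ ∘ v)) j := by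
  simp [mulVec, dotProduct, map_sum, ← Algebra.smul_def]

section Rational

variable {S : Matrix ι ι ℚ} {a : ι → ℚ}

theorem algebraMap_comp_mem_nefSubdivisors_iff {x : ι → ℚ} :
    algebraMap ℚ ℝ ∘ x ∈ nefSubdivisors (S.map (algebraMap ℚ ℝ)) (algebraMap ℚ ℝ ∘ a) ↔
      x ∈ nefSubdivisors S a := by
  simp only [nefSubdivisors, Set.mem_ofPred_eq, ← RingHom.map_mulVec, Function.comp_apply,
    eq_ratCast, Rat.cast_nonneg, Rat.cast_le]

theorem exists_algebraMap_comp_eq_of_isGreatest {m : ι → ℝ}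
    (hm : IsGreatest (nefSubdivisors (S.map (algebraMap ℚ ℝ)) (algebraMap ℚ ℝ ∘ a)) m) :
    ∃ q : ι → ℚ, algebraMap ℚ ℝ ∘ q = m := by
  obtain ⟨ψ, hψ⟩ := Module.Projective.exists_dual_eq_one ℚ (one_ne_zero : (1 : ℝ) ≠ 0)
  have hψ_algebraMap (c : ℚ) : ψ (algebraMap ℚ ℝ c) = c := by
    rw [Algebra.algebraMap_eq_smul_one, map_smul, hψ, smul_eq_mul, mul_one]
  refine ⟨ψ ∘ m, hm.eq_of_eventually_add_smul_sub_mem <|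
    eventually_add_smul_sub_mem_nefSubdivisors hm.1 (fun i hi => ?_) (fun i hi => ?_)
      fun j hj => ?_⟩
  · simp [hi]
  · rw [Function.comp_apply, Function.comp_apply, hi, Function.comp_apply, hψ_algebraMap]
  · rw [← RingHom.map_mulVec, ← LinearMap.map_mulVec_map_algebraMap, hj, map_zero, map_zero]

theorem exists_isGreatest_nefSubdivisors_rat (hoff : ∀ i j, i ≠ j → 0 ≤ S i j) (ha : 0 ≤ a) :
    ∃ q, IsGreatest (nefSubdivisors S a) q := by
  obtain ⟨m, hm⟩ := exists_isGreatest_nefSubdivisors (S := S.map (algebraMap ℚ ℝ))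
    (a := algebraMap ℚ ℝ ∘ a) (fun i j hij => by simpa using hoff i j hij)
    fun i => by simpa using ha i
  obtain ⟨q, rfl⟩ := exists_algebraMap_comp_eq_of_isGreatest hm
  refine ⟨q, algebraMap_comp_mem_nefSubdivisors_iff.mp hm.1, fun x hx i => ?_⟩
  simpa using hm.2 (algebraMap_comp_mem_nefSubdivisors_iff.mpr hx) i

end Rational

theorem stmt7_general (r : ℕ) (S : Matrix (Fin r) (Fin r) ℚ)
    (hoff : ∀ i j : Fin r, i ≠ j → 0 ≤ S i j)
    (a : Fin r → ℚ) (ha : ∀ i, 0 < a i) :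
    ∃ m ∈ {x : Fin r → ℚ | (∀ i, 0 ≤ x i ∧ x i ≤ a i) ∧ ∀ j, 0 ≤ S.mulVec x j},
      ∀ x ∈ {x : Fin r → ℚ | (∀ i, 0 ≤ x i ∧ x i ≤ a i) ∧ ∀ j, 0 ≤ S.mulVec x j},
        x ≤ m := by
  obtain ⟨m, hm_mem, hm_ub⟩ := exists_isGreatest_nefSubdivisors_rat hoff fun i => (ha i).le
  exact ⟨m, hm_mem, fun x hx => hm_ub hx⟩

theorem stmt7 (r : ℕ) (S : Matrix (Fin r) (Fin r) ℚ)
    (hsym : S.IsSymm) (hoff : ∀ i j : Fin r, i ≠ j → 0 ≤ S i j)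
    (a : Fin r → ℚ) (ha : ∀ i, 0 < a i) :
    ∃ m ∈ {x : Fin r → ℚ | (∀ i, 0 ≤ x i ∧ x i ≤ a i) ∧ ∀ j, 0 ≤ S.mulVec x j},
      ∀ x ∈ {x : Fin r → ℚ | (∀ i, 0 ≤ x i ∧ x i ≤ a i) ∧ ∀ j, 0 ≤ S.mulVec x j},
        x ≤ m :=
  stmt7_general r S hoff a ha
end

section
/- Let S be a symmetric r×r rational matrix with nonnegative off-diagonal entries and a ∈ ℚ^r with positive entries. Then the set K = { x ∈ [0,a] : S x ≥ 0 componentwise } is closed under componentwise maximum: if x', x'' ∈ K then their componentwise max lies in K. -/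
open Matrix

namespace Matrix

variable {n R : Type*} [Fintype n] [Semiring R]

theorem mulVec_apply_le_of_le_of_apply_eq [PartialOrder R] [IsOrderedRing R]
    {S : Matrix n n R} (hoff : ∀ i j, i ≠ j → 0 ≤ S i j)
    {x y : n → R} {j : n} (hle : x ≤ y) (hj : x j = y j) :
    (S *ᵥ x) j ≤ (S *ᵥ y) j := by
  refine Finset.sum_le_sum fun i _ => ?_
  rcases eq_or_ne i j with rfl | hij
  · rw [hj]
  · exact mul_le_mul_of_nonneg_left (hle i) (hoff j i hij.symm)

/-- At each coordinate `x ⊔ y` agrees with whichever of `x`, `y` is larger there,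
and dominates it everywhere else. -/
theorem mulVec_sup_nonneg [LinearOrder R] [IsOrderedRing R]
    {S : Matrix n n R} (hoff : ∀ i j, i ≠ j → 0 ≤ S i j) {x y : n → R}
    (hx : 0 ≤ S *ᵥ x) (hy : 0 ≤ S *ᵥ y) : 0 ≤ S *ᵥ (x ⊔ y) := by
  intro j
  rcases le_total (y j) (x j) with h | h
  · exact (hx j).trans <|
      mulVec_apply_le_of_le_of_apply_eq hoff le_sup_left (sup_eq_left.mpr h).symm
  · exact (hy j).trans <|
      mulVec_apply_le_of_le_of_apply_eq hoff le_sup_right (sup_eq_right.mpr h).symm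

end Matrix

theorem stmt8_general (r : ℕ) (S : Matrix (Fin r) (Fin r) ℚ)
    (hoff : ∀ i j : Fin r, i ≠ j → 0 ≤ S i j)
    (a : Fin r → ℚ)
    (x' x'' : Fin r → ℚ)
    (hx' : (∀ i, 0 ≤ x' i ∧ x' i ≤ a i) ∧ ∀ j, 0 ≤ S.mulVec x' j)
    (hx'' : (∀ i, 0 ≤ x'' i ∧ x'' i ≤ a i) ∧ ∀ j, 0 ≤ S.mulVec x'' j) :
    (∀ i, 0 ≤ max (x' i) (x'' i) ∧ max (x' i) (x'' i) ≤ a i) ∧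
      ∀ j, 0 ≤ S.mulVec (fun i => max (x' i) (x'' i)) j :=
  ⟨fun i => ⟨le_max_of_le_left (hx'.1 i).1, max_le (hx'.1 i).2 (hx''.1 i).2⟩,
    mulVec_sup_nonneg hoff hx'.2 hx''.2⟩

theorem stmt8 (r : ℕ) (S : Matrix (Fin r) (Fin r) ℚ)
    (hsym : S.IsSymm) (hoff : ∀ i j : Fin r, i ≠ j → 0 ≤ S i j)
    (a : Fin r → ℚ)
    (x' x'' : Fin r → ℚ)
    (hx' : (∀ i, 0 ≤ x' i ∧ x' i ≤ a i) ∧ ∀ j, 0 ≤ S.mulVec x' j)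
    (hx'' : (∀ i, 0 ≤ x'' i ∧ x'' i ≤ a i) ∧ ∀ j, 0 ≤ S.mulVec x'' j) :
    (∀ i, 0 ≤ max (x' i) (x'' i) ∧ max (x' i) (x'' i) ≤ a i) ∧
      ∀ j, 0 ≤ S.mulVec (fun i => max (x' i) (x'' i)) j :=
  stmt8_general r S hoff a x' x'' hx' hx''
end

section
/- Let S be a symmetric r×r rational matrix with nonnegative off-diagonal entries, and a ∈ ℚ^r with positive entries. Suppose p ∈ ℚ^r is an element of K = { x ∈ [0,a] : S x ≥ 0 } that is maximal with respect to the componentwise order. Then for every index j with pⱼ < aⱼ one has (S p)ⱼ = 0. -/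
/-! If `(S p)ⱼ > 0` while `pⱼ < aⱼ`, raising `pⱼ` by a small `ε > 0` keeps the point in `K`:
the coordinates `(S p)ᵢ`, `i ≠ j`, change by `S i j * ε ≥ 0`, and `(S p)ⱼ` changes by
`S j j * ε`, which is harmless for `ε` small. This contradicts maximality of `p`. -/

open Matrix

lemma Matrix.mulVec_add_single_apply {R ι : Type*} [CommSemiring R] [Fintype ι] [DecidableEq ι]
    (S : Matrix ι ι R) (p : ι → R) (j : ι) (ε : R) (i : ι) :
    (S *ᵥ (p + Pi.single j ε)) i = (S *ᵥ p) i + S i j * ε := by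
  simp [mulVec_add, mulVec_single, mul_comm]

section

variable {𝕜 ι : Type*} [Field 𝕜] [LinearOrder 𝕜] [IsStrictOrderedRing 𝕜] [DecidableEq ι]

lemma exists_pos_le_and_mul_le {δ x : 𝕜} (hδ : 0 < δ) (hx : 0 < x) (b : 𝕜) :
    ∃ ε, 0 < ε ∧ ε ≤ δ ∧ ε * b ≤ x := by
  rcases le_or_gt b 0 with hb | hb
  · exact ⟨δ, hδ, le_rfl, (mul_nonpos_of_nonneg_of_nonpos hδ.le hb).trans hx.le⟩
  · refine ⟨min δ (x / b), lt_min hδ (div_pos hx hb), min_le_left _ _, ?_⟩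
    calc min δ (x / b) * b ≤ x / b * b := mul_le_mul_of_nonneg_right (min_le_right _ _) hb.le
      _ = x := div_mul_cancel₀ x hb.ne'

lemma add_single_mem_box {a p : ι → 𝕜} {j : ι} {ε : 𝕜}
    (hp : ∀ i, 0 ≤ p i ∧ p i ≤ a i) (hε : 0 ≤ ε) (hεj : p j + ε ≤ a j) (i : ι) :
    0 ≤ (p + Pi.single j ε : ι → 𝕜) i ∧ (p + Pi.single j ε : ι → 𝕜) i ≤ a i := by
  rcases eq_or_ne i j with rfl | hij
  · simpa using ⟨add_nonneg (hp i).1 hε, hεj⟩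
  · simpa [hij] using hp i

lemma Matrix.mulVec_add_single_nonneg [Fintype ι] {S : Matrix ι ι 𝕜} {p : ι → 𝕜} {j : ι} {ε : 𝕜}
    (hoff : ∀ i, i ≠ j → 0 ≤ S i j) (hp : ∀ i, 0 ≤ (S *ᵥ p) i) (hε : 0 ≤ ε)
    (hεj : ε * -S j j ≤ (S *ᵥ p) j) (i : ι) :
    0 ≤ (S *ᵥ (p + Pi.single j ε)) i := by
  rw [mulVec_add_single_apply]
  rcases eq_or_ne i j with rfl | hij
  · linarith
  · exact add_nonneg (hp i) (mul_nonneg (hoff i hij) hε)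

end

theorem stmt9_general (r : ℕ) (S : Matrix (Fin r) (Fin r) ℚ)
    (hoff : ∀ i j : Fin r, i ≠ j → 0 ≤ S i j)
    (a : Fin r → ℚ)
    (p : Fin r → ℚ)
    (hp : (∀ i, 0 ≤ p i ∧ p i ≤ a i) ∧ ∀ j, 0 ≤ S.mulVec p j)
    (hmax : ∀ q : Fin r → ℚ,
      ((∀ i, 0 ≤ q i ∧ q i ≤ a i) ∧ ∀ j, 0 ≤ S.mulVec q j) → p ≤ q → q = p) :
    ∀ j, p j < a j → S.mulVec p j = 0 := by
  intro j hj
  by_contra hne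
  have hpos : 0 < (S *ᵥ p) j := (hp.2 j).lt_of_ne (Ne.symm hne)
  obtain ⟨ε, hε, hεa, hεS⟩ := exists_pos_le_and_mul_le (sub_pos.2 hj) hpos (-S j j)
  have hq_mem := And.intro (add_single_mem_box hp.1 hε.le (by linarith))
    (mulVec_add_single_nonneg (hoff · j) hp.2 hε.le hεS)
  have hle : p ≤ p + Pi.single j ε := le_add_of_nonneg_right (Pi.single_nonneg.2 hε.le)
  have hqj := congrFun (hmax _ hq_mem hle) j
  simp only [Pi.add_apply, Pi.single_eq_same, add_eq_left] at hqj
  exact hε.ne' hqj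

theorem stmt9 (r : ℕ) (S : Matrix (Fin r) (Fin r) ℚ)
    (hsym : S.IsSymm) (hoff : ∀ i j : Fin r, i ≠ j → 0 ≤ S i j)
    (a : Fin r → ℚ) (ha : ∀ i, 0 < a i)
    (p : Fin r → ℚ)
    (hp : (∀ i, 0 ≤ p i ∧ p i ≤ a i) ∧ ∀ j, 0 ≤ S.mulVec p j)
    (hmax : ∀ q : Fin r → ℚ,
      ((∀ i, 0 ≤ q i ∧ q i ≤ a i) ∧ ∀ j, 0 ≤ S.mulVec q j) → p ≤ q → q = p) :
    ∀ j, p j < a j → S.mulVec p j = 0 :=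
  stmt9_general r S hoff a p hp hmax
end

section
/- Let S be a symmetric r×r real matrix with nonnegative off-diagonal entries such that S is not negative definite. Then there is a nonzero vector e ∈ ℝ^r with e ≥ 0, supported in a subset J ⊆ Fin r, such that (S e)ⱼ ≥ 0 for all j ∈ J and eᵀ S e ≥ 0. -/
open Matrix

private lemma reApply_eq (r : ℕ) (A : Matrix (Fin r) (Fin r) ℝ)
    (v : EuclideanSpace ℝ (Fin r)) :
    (LinearMap.toContinuousLinearMap (Matrix.toEuclideanLin A)).reApplyInnerSelf v
      = (WithLp.equiv 2 _ v) ⬝ᵥ A.mulVec (WithLp.equiv 2 _ v) := by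
  simp [ContinuousLinearMap.reApplyInnerSelf, PiLp.inner_apply, Matrix.toEuclideanLin_apply,
    dotProduct, mulVec, Finset.mul_sum, mul_comm]

private lemma dot_abs_le (r : ℕ) (A : Matrix (Fin r) (Fin r) ℝ)
    (hA : ∀ i j, 0 ≤ A i j) (v : Fin r → ℝ) :
    v ⬝ᵥ A.mulVec v ≤ (fun i => |v i|) ⬝ᵥ A.mulVec (fun i => |v i|) := by
  simp only [dotProduct, mulVec, Finset.mul_sum]
  refine Finset.sum_le_sum fun i _ => Finset.sum_le_sum fun j _ => ?_
  calc v i * (A i j * v j) ≤ |v i * (A i j * v j)| := le_abs_self _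
    _ = |v i| * (A i j * |v j|) := by
        rw [abs_mul, abs_mul, abs_of_nonneg (hA i j)]

theorem stmt11 (r : ℕ) (S : Matrix (Fin r) (Fin r) ℝ)
    (hsym : S.IsSymm) (hoff : ∀ i j : Fin r, i ≠ j → 0 ≤ S i j)
    (hnnd : ∃ x : Fin r → ℝ, x ≠ 0 ∧ 0 ≤ x ⬝ᵥ S.mulVec x) :
    ∃ e : Fin r → ℝ, e ≠ 0 ∧ (∀ i, 0 ≤ e i) ∧
      (∀ j, 0 < e j → 0 ≤ S.mulVec e j) ∧ 0 ≤ e ⬝ᵥ S.mulVec e := by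
  classical
  obtain ⟨x, hx0, hxS⟩ := hnnd
  have hr : 0 < r := by
    rcases Nat.eq_zero_or_pos r with h | h
    · exact absurd (by subst h; exact Subsingleton.elim x 0) hx0
    · exact h
  set c : ℝ := ∑ i, |S i i| with hc
  have hc0 : 0 ≤ c := Finset.sum_nonneg fun i _ => abs_nonneg _
  set A : Matrix (Fin r) (Fin r) ℝ := S + c • (1 : Matrix (Fin r) (Fin r) ℝ) with hA
  have hAentry : ∀ i j, 0 ≤ A i j := by
    intro i j
    by_cases hij : i = j
    · subst hij
      have h1 : |S i i| ≤ c :=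
        Finset.single_le_sum (f := fun i => |S i i|) (fun i _ => abs_nonneg _) (Finset.mem_univ i)
      have h2 : -S i i ≤ |S i i| := neg_le_abs _
      simp only [hA, Matrix.add_apply, Matrix.smul_apply, Matrix.one_apply_eq, smul_eq_mul,
        mul_one]
      linarith
    · simp only [hA, Matrix.add_apply, Matrix.smul_apply, Matrix.one_apply_ne hij, smul_eq_mul,
        mul_zero, add_zero]
      exact hoff i j hij
  have hAherm : A.IsHermitian := by
    have : A.IsSymm := by
      simp only [hA, Matrix.IsSymm, Matrix.transpose_add, Matrix.transpose_smul,
        Matrix.transpose_one, hsym.eq]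
    simpa [Matrix.IsHermitian, Matrix.conjTranspose_eq_transpose_of_trivial, Matrix.IsSymm] using this
  set T : EuclideanSpace ℝ (Fin r) →L[ℝ] EuclideanSpace ℝ (Fin r) :=
    LinearMap.toContinuousLinearMap (Matrix.toEuclideanLin A) with hT
  have hTsa : IsSelfAdjoint T := by
    rw [ContinuousLinearMap.isSelfAdjoint_iff_isSymmetric]
    exact Matrix.isHermitian_iff_isSymmetric.mp hAherm
  -- maximizer on the unit sphere
  have hsph : (Metric.sphere (0 : EuclideanSpace ℝ (Fin r)) 1).Nonempty := by
    refine ⟨EuclideanSpace.single ⟨0, hr⟩ (1 : ℝ), ?_⟩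
    simp [EuclideanSpace.norm_single]
  obtain ⟨x₀, hx₀mem, hx₀max⟩ :=
    (isCompact_sphere (0 : EuclideanSpace ℝ (Fin r)) 1).exists_isMaxOn hsph
      T.reApplyInnerSelf_continuous.continuousOn
  have hx₀norm : ‖x₀‖ = 1 := by simpa using mem_sphere_zero_iff_norm.mp hx₀mem
  -- the entrywise absolute value of the maximizer
  set e : Fin r → ℝ := fun i => |(WithLp.equiv 2 (Fin r → ℝ)) x₀ i| with he
  set y₀ : EuclideanSpace ℝ (Fin r) := (WithLp.equiv 2 (Fin r → ℝ)).symm e with hy₀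
  have hy₀norm : ‖y₀‖ = 1 := by
    rw [EuclideanSpace.norm_eq] at hx₀norm ⊢
    simpa [hy₀, he, sq_abs] using hx₀norm
  have hy₀mem : y₀ ∈ Metric.sphere (0 : EuclideanSpace ℝ (Fin r)) 1 :=
    mem_sphere_zero_iff_norm.mpr hy₀norm
  have hfy₀ : T.reApplyInnerSelf x₀ ≤ T.reApplyInnerSelf y₀ := by
    rw [hT, reApply_eq, reApply_eq]
    simpa [hy₀, he] using dot_abs_le r A hAentry ((WithLp.equiv 2 (Fin r → ℝ)) x₀)
  have hy₀max : IsMaxOn T.reApplyInnerSelf (Metric.sphere (0 : EuclideanSpace ℝ (Fin r)) 1) y₀ :=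
    fun z hz => le_trans (hx₀max hz) hfy₀
  -- y₀ is an eigenvector
  have heig : T y₀ = (T.rayleighQuotient y₀) • y₀ := by
    refine hTsa.eq_smul_self_of_isLocalExtrOn ?_
    rw [hy₀norm]
    exact Or.inr hy₀max.localize
  set μ : ℝ := T.rayleighQuotient y₀ with hμ
  have hμval : μ = T.reApplyInnerSelf y₀ := by
    simp [hμ, ContinuousLinearMap.rayleighQuotient, hy₀norm]
  -- μ ≥ c via the vector x
  have hxx : (0 : ℝ) < x ⬝ᵥ x := by
    rcases dotProduct_self_eq_zero.ne.mpr hx0 |>.lt_or_gt with h | h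
    · exact absurd h (not_lt.mpr (Finset.sum_nonneg fun i _ => mul_self_nonneg _))
    · exact h
  have hμc : c ≤ μ := by
    set u : EuclideanSpace ℝ (Fin r) :=
      (WithLp.equiv 2 (Fin r → ℝ)).symm ((Real.sqrt (x ⬝ᵥ x))⁻¹ • x) with hu
    have hsq : Real.sqrt (x ⬝ᵥ x) > 0 := Real.sqrt_pos.mpr hxx
    have hxEnorm : ‖(WithLp.equiv 2 (Fin r → ℝ)).symm x‖ = Real.sqrt (x ⬝ᵥ x) := by
      rw [EuclideanSpace.norm_eq]
      congr 1
      exact Finset.sum_congr rfl fun i _ => by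
        rw [Real.norm_eq_abs, sq_abs, sq]
        rfl
    have hueq : u = (Real.sqrt (x ⬝ᵥ x))⁻¹ • ((WithLp.equiv 2 (Fin r → ℝ)).symm x) := rfl
    have hunorm : ‖u‖ = 1 := by
      rw [hueq, norm_smul, hxEnorm, Real.norm_eq_abs, abs_of_nonneg (inv_nonneg.mpr hsq.le),
        inv_mul_cancel₀ hsq.ne']
    have humem : u ∈ Metric.sphere (0 : EuclideanSpace ℝ (Fin r)) 1 :=
      mem_sphere_zero_iff_norm.mpr hunorm
    have hfu : T.reApplyInnerSelf u = ((Real.sqrt (x ⬝ᵥ x))⁻¹)^2 * (x ⬝ᵥ A.mulVec x) := by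
      rw [hT, reApply_eq]
      simp only [hu, Equiv.apply_symm_apply]
      rw [smul_dotProduct, Matrix.mulVec_smul, dotProduct_smul]
      simp [smul_eq_mul, sq]; ring
    have hxAx : x ⬝ᵥ A.mulVec x = x ⬝ᵥ S.mulVec x + c * (x ⬝ᵥ x) := by
      simp [hA, Matrix.add_mulVec, Matrix.smul_mulVec, Matrix.one_mulVec,
        dotProduct_add, dotProduct_smul, smul_eq_mul]
    have h1 : c ≤ T.reApplyInnerSelf u := by
      rw [hfu, hxAx]
      have hinv : ((Real.sqrt (x ⬝ᵥ x))⁻¹)^2 = (x ⬝ᵥ x)⁻¹ := by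
        rw [← Real.sqrt_inv, Real.sq_sqrt (by positivity)]
      rw [hinv]
      have : (x ⬝ᵥ x)⁻¹ * (x ⬝ᵥ S.mulVec x + c * (x ⬝ᵥ x))
          = (x ⬝ᵥ x)⁻¹ * (x ⬝ᵥ S.mulVec x) + c := by
        field_simp
      rw [this]
      have : 0 ≤ (x ⬝ᵥ x)⁻¹ * (x ⬝ᵥ S.mulVec x) := by positivity
      linarith
    calc c ≤ T.reApplyInnerSelf u := h1
      _ ≤ T.reApplyInnerSelf y₀ := hy₀max humem
      _ = μ := hμval.symm
  -- translate the eigenvector equation to mulVec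
  have hAe : A.mulVec e = μ • e := by
    have := congrArg (WithLp.equiv 2 (Fin r → ℝ)) heig
    simpa [hT, hy₀, Matrix.toEuclideanLin_apply] using this
  have hSe : S.mulVec e = (μ - c) • e := by
    have : A.mulVec e = S.mulVec e + c • e := by
      simp [hA, Matrix.add_mulVec, Matrix.smul_mulVec, Matrix.one_mulVec]
    rw [this] at hAe
    funext i
    have := congrFun hAe i
    simp only [Pi.add_apply, Pi.smul_apply, smul_eq_mul] at this ⊢
    linarith
  have he0 : e ≠ 0 := by
    intro h
    apply hy₀norm ▸ one_ne_zero
    rw [hy₀, h]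
    simp
  refine ⟨e, he0, fun i => abs_nonneg _, ?_, ?_⟩
  · intro j _
    rw [hSe]
    have : 0 ≤ μ - c := by linarith
    exact mul_nonneg this (abs_nonneg _)
  · rw [hSe]
    simp only [dotProduct, Pi.smul_apply, smul_eq_mul]
    refine Finset.sum_nonneg fun i _ => ?_
    have : 0 ≤ μ - c := by linarith
    positivity
end

section
/- Uniqueness of the Zariski decomposition in matrix form: Let S be a symmetric r×r rational matrix with nonnegative off-diagonal entries and a ∈ ℚ^r with positive entries. Suppose (p, n) and (p', n') both satisfy: p + n = a, p, n ≥ 0, S p ≥ 0 componentwise, (S p)ⱼ = 0 for all j in the support of n, and the principal submatrix of S on the support of n is negative definite (or n = 0); similarly for (p', n'). Then p = p' and n = n'. -/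
/-!
Put `d = n - n' = p' - p` and let `y = d⁺`. Where `y` is positive so is `n`, hence `S p` vanishes
there and `y ⬝ S d = y ⬝ S p' ≥ 0`. Since `y = d + d⁻` with `d⁻` supported off the support of `y`
and `S` has nonnegative off-diagonal entries, also `y ⬝ S d⁻ ≥ 0`, so `y ⬝ S y ≥ 0`. As `y` is
supported in the support of `n`, negative definiteness forces `y = 0`, i.e. `n ≤ n'`; by symmetry
`n = n'`, and then `p = p'`.
-/

open Matrix

namespace Matrix

variable {ι R : Type*} [Fintype ι]

def NegDefOn [NonUnitalNonAssocSemiring R] [Preorder R] (S : Matrix ι ι R) (J : ι → Prop) :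
    Prop :=
  ∀ x : ι → R, (∀ j, ¬ J j → x j = 0) → x ≠ 0 → x ⬝ᵥ S *ᵥ x < 0

theorem NegDefOn.of_map_ratCast {K : Type*} [Field K] [LinearOrder K] [IsStrictOrderedRing K]
    {S : Matrix ι ι ℚ} {J : ι → Prop} (h : (S.map (Rat.cast : ℚ → K)).NegDefOn J) :
    S.NegDefOn J := by
  intro x hx hx0
  have hcast : (Rat.castHom K ∘ x) ⬝ᵥ S.map (Rat.castHom K) *ᵥ (Rat.castHom K ∘ x)
      = Rat.castHom K (x ⬝ᵥ S *ᵥ x) := by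
    rw [RingHom.map_dotProduct]
    congr 1
    funext i
    exact (RingHom.map_mulVec _ S x i).symm
  have hlt := h (Rat.castHom K ∘ x) (fun j hj => by simp [hx j hj])
    (fun h0 => hx0 (funext fun j => by simpa using congrFun h0 j))
  rw [show (Rat.cast : ℚ → K) = Rat.castHom K from rfl, hcast, Rat.coe_castHom] at hlt
  exact_mod_cast hlt

variable [CommRing R] [LinearOrder R] [IsOrderedRing R]

theorem dotProduct_mulVec_nonneg_of_disjoint {S : Matrix ι ι R}
    (hoff : ∀ i j, i ≠ j → 0 ≤ S i j) {x y : ι → R} (hx : 0 ≤ x) (hy : 0 ≤ y)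
    (hxy : ∀ i, x i = 0 ∨ y i = 0) : 0 ≤ x ⬝ᵥ S *ᵥ y := by
  refine Finset.sum_nonneg fun i _ => ?_
  rw [mulVec, dotProduct, Finset.mul_sum]
  refine Finset.sum_nonneg fun j _ => ?_
  obtain rfl | hij := eq_or_ne i j
  · rcases hxy i with h | h <;> simp [h]
  · exact mul_nonneg (hx i) (mul_nonneg (hoff i j hij) (hy j))

theorem le_of_negDefOn_of_mulVec_eq_zero {S : Matrix ι ι R}
    (hoff : ∀ i j, i ≠ j → 0 ≤ S i j) {p n p' n' : ι → R} (hsum : p + n = p' + n')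
    (hn' : 0 ≤ n') (hnef' : 0 ≤ S *ᵥ p') (horth : ∀ j, 0 < n j → (S *ᵥ p) j = 0)
    (hneg : S.NegDefOn (0 < n ·)) : n ≤ n' := by
  set d := n - n' with hd_def
  have hd : d = p' - p := by
    rw [hd_def, sub_eq_sub_iff_add_eq_add, add_comm n, hsum, add_comm]
  have hy_supp : ∀ j, d⁺ j ≠ 0 → 0 < n j := fun j hj => by
    have : 0 < d j := posPart_pos_iff.mp ((posPart_nonneg (d j)).lt_of_ne' hj)
    exact (hn' j).trans_lt (sub_pos.mp this)
  have hdisj : ∀ i, d⁺ i = 0 ∨ d⁻ i = 0 := fun i =>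
    (le_total (d i) 0).imp posPart_eq_zero.mpr negPart_eq_zero.mpr
  have hyp : d⁺ ⬝ᵥ S *ᵥ p = 0 := Finset.sum_eq_zero fun j _ => by
    by_cases hj : d⁺ j = 0
    · simp [hj]
    · simp [horth j (hy_supp j hj)]
  have hyp' : 0 ≤ d⁺ ⬝ᵥ S *ᵥ p' :=
    Finset.sum_nonneg fun j _ => mul_nonneg (posPart_nonneg (d j)) (hnef' j)
  have hyz : 0 ≤ d⁺ ⬝ᵥ S *ᵥ d⁻ :=
    dotProduct_mulVec_nonneg_of_disjoint hoff (posPart_nonneg d) (negPart_nonneg d) hdisj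
  have hyy : 0 ≤ d⁺ ⬝ᵥ S *ᵥ d⁺ := by
    have hSy : S *ᵥ d⁺ = S *ᵥ p' - S *ᵥ p + S *ᵥ d⁻ := by
      rw [← mulVec_sub, ← mulVec_add, ← hd, ← sub_eq_iff_eq_add.mp (posPart_sub_negPart d)]
    rw [hSy, dotProduct_add, dotProduct_sub, hyp, sub_zero]
    exact add_nonneg hyp' hyz
  have hy0 : d⁺ = 0 := by
    by_contra h
    exact (hneg d⁺ (fun j hj => by_contra fun h => hj (hy_supp j h)) h).not_ge hyy
  exact fun j => sub_nonpos.mp (posPart_eq_zero.mp (congrFun hy0 j))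

end Matrix

theorem stmt12_general (r : ℕ) (S : Matrix (Fin r) (Fin r) ℚ)
    (hoff : ∀ i j : Fin r, i ≠ j → 0 ≤ S i j)
    (a : Fin r → ℚ)
    (p n p' n' : Fin r → ℚ)
    (hsum : p + n = a) (hsum' : p' + n' = a)
    (hn : ∀ i, 0 ≤ n i)
    (hn' : ∀ i, 0 ≤ n' i)
    (hnef : ∀ j, 0 ≤ S.mulVec p j) (hnef' : ∀ j, 0 ≤ S.mulVec p' j)
    (horth : ∀ j, 0 < n j → S.mulVec p j = 0)
    (horth' : ∀ j, 0 < n' j → S.mulVec p' j = 0)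
    (hneg : ∀ x : Fin r → ℝ, (∀ j, ¬ 0 < n j → x j = 0) → x ≠ 0 →
      x ⬝ᵥ (S.map (Rat.cast : ℚ → ℝ)).mulVec x < 0)
    (hneg' : ∀ x : Fin r → ℝ, (∀ j, ¬ 0 < n' j → x j = 0) → x ≠ 0 →
      x ⬝ᵥ (S.map (Rat.cast : ℚ → ℝ)).mulVec x < 0) :
    p = p' ∧ n = n' := by
  have hs : p + n = p' + n' := hsum.trans hsum'.symm
  have hnn : n = n' := le_antisymm
    (le_of_negDefOn_of_mulVec_eq_zero hoff hs hn' hnef' horth (.of_map_ratCast hneg))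
    (le_of_negDefOn_of_mulVec_eq_zero hoff hs.symm hn hnef horth' (.of_map_ratCast hneg'))
  subst hnn
  exact ⟨add_right_cancel hs, rfl⟩

theorem stmt12 (r : ℕ) (S : Matrix (Fin r) (Fin r) ℚ)
    (hsym : S.IsSymm) (hoff : ∀ i j : Fin r, i ≠ j → 0 ≤ S i j)
    (a : Fin r → ℚ) (ha : ∀ i, 0 < a i)
    (p n p' n' : Fin r → ℚ)
    (hsum : p + n = a) (hsum' : p' + n' = a)
    (hp : ∀ i, 0 ≤ p i) (hn : ∀ i, 0 ≤ n i)
    (hp' : ∀ i, 0 ≤ p' i) (hn' : ∀ i, 0 ≤ n' i)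
    (hnef : ∀ j, 0 ≤ S.mulVec p j) (hnef' : ∀ j, 0 ≤ S.mulVec p' j)
    (horth : ∀ j, 0 < n j → S.mulVec p j = 0)
    (horth' : ∀ j, 0 < n' j → S.mulVec p' j = 0)
    (hneg : ∀ x : Fin r → ℝ, (∀ j, ¬ 0 < n j → x j = 0) → x ≠ 0 →
      x ⬝ᵥ (S.map (Rat.cast : ℚ → ℝ)).mulVec x < 0)
    (hneg' : ∀ x : Fin r → ℝ, (∀ j, ¬ 0 < n' j → x j = 0) → x ≠ 0 →
      x ⬝ᵥ (S.map (Rat.cast : ℚ → ℝ)).mulVec x < 0) :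
    p = p' ∧ n = n' :=
  stmt12_general r S hoff a p n p' n' hsum hsum' hn hn' hnef hnef' horth horth' hneg hneg'
end

section
/- Let S be a symmetric r×r rational matrix with nonnegative off-diagonal entries, a ∈ ℚ^r with aᵢ > 0, and suppose p + n = a with p, n ≥ 0, S p ≥ 0 componentwise, (S p)ⱼ = 0 for every j in the support of n, and S negative definite on the support of n. Then p is the greatest element of K = { x ∈ [0,a] : S x ≥ 0 } in the componentwise order. -/
/-!
Let `y = (q - p)⁺`. Since `q ≤ a = p + n`, `y` is supported on the support of `n`, where
`S p` vanishes, so `yᵀ S (q - p) = yᵀ S q ≥ 0`. Writing `q - p = y - (q - p)⁻`, the cross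
term `yᵀ S (q - p)⁻` is nonnegative because the two parts have disjoint supports and `S` is
nonnegative off the diagonal; hence `yᵀ S y ≥ 0`, and negative definiteness on the support
of `n` forces `y = 0`, i.e. `q ≤ p`.
-/

open Matrix

lemma RingHom.map_dotProduct_mulVec {ι R R' : Type*} [Fintype ι] [NonAssocSemiring R]
    [NonAssocSemiring R'] (f : R →+* R') (M : Matrix ι ι R) (v w : ι → R) :
    f (v ⬝ᵥ M *ᵥ w) = (f ∘ v) ⬝ᵥ M.map f *ᵥ (f ∘ w) := by
  rw [f.map_dotProduct]
  congr 1
  funext i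
  exact f.map_mulVec M w i

section OffDiagNonneg

variable {ι R : Type*} [Fintype ι] [CommRing R] [LinearOrder R] [IsStrictOrderedRing R]
  {S : Matrix ι ι R}

lemma dotProduct_mulVec_nonneg_of_disjoint (hoff : ∀ i j, i ≠ j → 0 ≤ S i j)
    {y z : ι → R} (hy : 0 ≤ y) (hz : 0 ≤ z) (hyz : ∀ i, y i * z i = 0) :
    0 ≤ y ⬝ᵥ S *ᵥ z := by
  simp only [dotProduct, mulVec, Finset.mul_sum]
  refine Finset.sum_nonneg fun i _ => Finset.sum_nonneg fun j _ => ?_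
  rcases eq_or_ne i j with rfl | hij
  · rw [mul_left_comm, hyz i, mul_zero]
  · exact mul_nonneg (hy i) (mul_nonneg (hoff i j hij) (hz j))

lemma posPart_mul_negPart_eq_zero (x : R) : x⁺ * x⁻ = 0 := by
  rcases le_total x 0 with hx | hx
  · rw [posPart_eq_zero.2 hx, zero_mul]
  · rw [negPart_eq_zero.2 hx, mul_zero]

lemma posPart_dotProduct_mulVec_le (hoff : ∀ i j, i ≠ j → 0 ≤ S i j) (d : ι → R) :
    d⁺ ⬝ᵥ S *ᵥ d ≤ d⁺ ⬝ᵥ S *ᵥ d⁺ := by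
  have hcross : 0 ≤ d⁺ ⬝ᵥ S *ᵥ d⁻ :=
    dotProduct_mulVec_nonneg_of_disjoint hoff (posPart_nonneg d) (negPart_nonneg d)
      fun i => posPart_mul_negPart_eq_zero (d i)
  calc d⁺ ⬝ᵥ S *ᵥ d = d⁺ ⬝ᵥ S *ᵥ d⁺ - d⁺ ⬝ᵥ S *ᵥ d⁻ := by
        rw [← dotProduct_sub, ← mulVec_sub, posPart_sub_negPart]
    _ ≤ d⁺ ⬝ᵥ S *ᵥ d⁺ := sub_le_self _ hcross

end OffDiagNonneg

theorem stmt13_general (r : ℕ) (S : Matrix (Fin r) (Fin r) ℚ)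
    (hoff : ∀ i j : Fin r, i ≠ j → 0 ≤ S i j)
    (a : Fin r → ℚ)
    (p n : Fin r → ℚ)
    (hsum : p + n = a)
    (horth : ∀ j, 0 < n j → S.mulVec p j = 0)
    (hneg : ∀ x : Fin r → ℝ, (∀ j, ¬ 0 < n j → x j = 0) → x ≠ 0 →
      x ⬝ᵥ (S.map (Rat.cast : ℚ → ℝ)).mulVec x < 0) :
    ∀ q : Fin r → ℚ,
      ((∀ i, 0 ≤ q i ∧ q i ≤ a i) ∧ ∀ j, 0 ≤ S.mulVec q j) → q ≤ p := by
  rintro q ⟨hqa, hSq⟩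
  set y := (q - p)⁺
  have hy_supp : ∀ j, ¬ 0 < n j → y j = 0 := fun j hj => by
    have hqp : q j ≤ p j := by
      linarith [(hqa j).2, congrFun hsum j, not_lt.1 hj, Pi.add_apply p n j]
    exact posPart_eq_zero.2 (sub_nonpos.2 hqp)
  have hySp : y ⬝ᵥ S *ᵥ p = 0 := Finset.sum_eq_zero fun j _ => by
    by_cases hj : 0 < n j
    · rw [horth j hj, mul_zero]
    · rw [hy_supp j hj, zero_mul]
  have hySq : 0 ≤ y ⬝ᵥ S *ᵥ q :=
    Finset.sum_nonneg fun j _ => mul_nonneg (posPart_nonneg (q j - p j)) (hSq j)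
  have hySy : 0 ≤ y ⬝ᵥ S *ᵥ y := calc
    0 ≤ y ⬝ᵥ S *ᵥ (q - p) := by rwa [mulVec_sub, dotProduct_sub, hySp, sub_zero]
    _ ≤ y ⬝ᵥ S *ᵥ y := posPart_dotProduct_mulVec_le hoff (q - p)
  have hy0 : y = 0 := by
    by_contra hy
    have hlt := hneg (Rat.cast ∘ y) (fun j hj => by simp [hy_supp j hj])
      fun h => hy (funext fun j => by simpa using congrFun h j)
    have hcast :
        ((y ⬝ᵥ S *ᵥ y : ℚ) : ℝ) = Rat.cast ∘ y ⬝ᵥ S.map Rat.cast *ᵥ Rat.cast ∘ y :=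
      (Rat.castHom ℝ).map_dotProduct_mulVec S y y
    exact hySy.not_gt (by exact_mod_cast hcast ▸ hlt)
  exact sub_nonpos.1 (posPart_eq_zero.1 hy0)

theorem stmt13 (r : ℕ) (S : Matrix (Fin r) (Fin r) ℚ)
    (hsym : S.IsSymm) (hoff : ∀ i j : Fin r, i ≠ j → 0 ≤ S i j)
    (a : Fin r → ℚ) (ha : ∀ i, 0 < a i)
    (p n : Fin r → ℚ)
    (hsum : p + n = a)
    (hp : ∀ i, 0 ≤ p i) (hn : ∀ i, 0 ≤ n i)
    (hnef : ∀ j, 0 ≤ S.mulVec p j)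
    (horth : ∀ j, 0 < n j → S.mulVec p j = 0)
    (hneg : ∀ x : Fin r → ℝ, (∀ j, ¬ 0 < n j → x j = 0) → x ≠ 0 →
      x ⬝ᵥ (S.map (Rat.cast : ℚ → ℝ)).mulVec x < 0) :
    ∀ q : Fin r → ℚ,
      ((∀ i, 0 ≤ q i ∧ q i ≤ a i) ∧ ∀ j, 0 ≤ S.mulVec q j) → q ≤ p :=
  stmt13_general r S hoff a p n hsum horth hneg
end

section
/- Let S be a symmetric r×r real matrix with nonnegative off-diagonal entries that is negative semidefinite, and let R ∈ ℝ^r be nonzero with S R = 0. Write R = R⁺ − R⁻ with disjoint supports. If neither R ≥ 0 nor −R ≥ 0 (i.e., both R⁺ and R⁻ are nonzero), then (R⁺)ᵀ S R⁺ = 0 and (R⁻)ᵀ S R⁻ = 0. -/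
/-!
Write `R = R⁺ - R⁻`. Since `R⁺` and `R⁻` have disjoint supports, the cross term `R⁺ᵀ S R⁻` only
involves off-diagonal entries of `S`, so it is nonnegative. Hence
`0 = Rᵀ S R = R⁺ᵀ S R⁺ - 2 R⁺ᵀ S R⁻ + R⁻ᵀ S R⁻` is a sum of three nonpositive terms,
and all of them vanish.
-/

open Matrix

variable {n α : Type*} [Fintype n]

lemma Matrix.IsSymm.sub_dotProduct_mulVec_sub [CommRing α] {S : Matrix n n α} (hS : S.IsSymm)
    (x y : n → α) :
    (x - y) ⬝ᵥ S *ᵥ (x - y) = x ⬝ᵥ S *ᵥ x - 2 * (x ⬝ᵥ S *ᵥ y) + y ⬝ᵥ S *ᵥ y := by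
  have hyx : y ⬝ᵥ S *ᵥ x = x ⬝ᵥ S *ᵥ y := by
    rw [dotProduct_mulVec, dotProduct_comm, ← mulVec_transpose, hS.eq]
  rw [mulVec_sub, sub_dotProduct, dotProduct_sub, dotProduct_sub, hyx]
  ring

section LinearOrderedRing

variable [CommRing α] [LinearOrder α] [IsStrictOrderedRing α]

lemma posPart_mul_negPart_eq_zero_s15 (a : α) : a⁺ * a⁻ = 0 := by
  rcases le_total a 0 with h | h
  · rw [posPart_eq_zero.mpr h, zero_mul]
  · rw [negPart_eq_zero.mpr h, mul_zero]

lemma Matrix.dotProduct_mulVec_nonneg_of_disjoint_s15 {S : Matrix n n α}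
    (hoff : ∀ i j, i ≠ j → 0 ≤ S i j) {x y : n → α} (hx : 0 ≤ x) (hy : 0 ≤ y)
    (hxy : ∀ i, x i * y i = 0) : 0 ≤ x ⬝ᵥ S *ᵥ y := by
  refine Finset.sum_nonneg fun i _ => ?_
  rw [mulVec, dotProduct, Finset.mul_sum]
  refine Finset.sum_nonneg fun j _ => ?_
  obtain rfl | hij := eq_or_ne i j
  · rw [mul_left_comm, hxy, mul_zero]
  · exact mul_nonneg (hx i) (mul_nonneg (hoff i j hij) (hy j))

theorem Matrix.IsSymm.dotProduct_mulVec_posPart_eq_zero {S : Matrix n n α} (hS : S.IsSymm)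
    (hoff : ∀ i j, i ≠ j → 0 ≤ S i j) (hnsd : ∀ x, x ⬝ᵥ S *ᵥ x ≤ 0) {R : n → α}
    (hR : R ⬝ᵥ S *ᵥ R = 0) : R⁺ ⬝ᵥ S *ᵥ R⁺ = 0 ∧ R⁻ ⬝ᵥ S *ᵥ R⁻ = 0 := by
  have hcross : 0 ≤ R⁺ ⬝ᵥ S *ᵥ R⁻ := dotProduct_mulVec_nonneg_of_disjoint_s15 hoff
    (posPart_nonneg R) (negPart_nonneg R) fun i => posPart_mul_negPart_eq_zero_s15 (R i)
  rw [← posPart_sub_negPart R, hS.sub_dotProduct_mulVec_sub] at hR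
  have hpos := hnsd R⁺
  have hneg := hnsd R⁻
  constructor <;> linarith

end LinearOrderedRing

theorem stmt15_general (r : ℕ) (S : Matrix (Fin r) (Fin r) ℝ)
    (hsym : S.IsSymm) (hoff : ∀ i j : Fin r, i ≠ j → 0 ≤ S i j)
    (hnsd : ∀ x : Fin r → ℝ, x ⬝ᵥ S.mulVec x ≤ 0)
    (R : Fin r → ℝ) (hker : S.mulVec R = 0) :
    (fun i => max (R i) 0) ⬝ᵥ S.mulVec (fun i => max (R i) 0) = 0 ∧
    (fun i => max (-R i) 0) ⬝ᵥ S.mulVec (fun i => max (-R i) 0) = 0 :=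
  hsym.dotProduct_mulVec_posPart_eq_zero hoff hnsd (by rw [hker, dotProduct_zero])

theorem stmt15 (r : ℕ) (S : Matrix (Fin r) (Fin r) ℝ)
    (hsym : S.IsSymm) (hoff : ∀ i j : Fin r, i ≠ j → 0 ≤ S i j)
    (hnsd : ∀ x : Fin r → ℝ, x ⬝ᵥ S.mulVec x ≤ 0)
    (R : Fin r → ℝ) (hR : R ≠ 0) (hker : S.mulVec R = 0)
    (hpos : (fun i => max (R i) 0) ≠ 0) (hneg : (fun i => max (-R i) 0) ≠ 0) :
    (fun i => max (R i) 0) ⬝ᵥ S.mulVec (fun i => max (R i) 0) = 0 ∧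
    (fun i => max (-R i) 0) ⬝ᵥ S.mulVec (fun i => max (-R i) 0) = 0 :=
  stmt15_general r S hsym hoff hnsd R hker
end

section
/- Let S be a symmetric r×r rational matrix with nonnegative off-diagonal entries and a ∈ ℚ^r with positive entries. Then 0 ∈ K = { x ∈ [0,a] : S x ≥ 0 componentwise }, and, viewing K as a subset of ℚ^r with the componentwise order, for x', x'' ∈ K we have max(x',x'') ∈ K (componentwise max); hence K has a unique maximal element if and only if it has a greatest element. -/
open Matrix

theorem stmt17 (r : ℕ) (S : Matrix (Fin r) (Fin r) ℚ)
    (hsym : S.IsSymm) (hoff : ∀ i j : Fin r, i ≠ j → 0 ≤ S i j)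
    (a : Fin r → ℚ) (ha : ∀ i, 0 < a i)
    (K : Set (Fin r → ℚ))
    (hK : K = {x : Fin r → ℚ | (∀ i, 0 ≤ x i ∧ x i ≤ a i) ∧ ∀ j, 0 ≤ S.mulVec x j}) :
    (0 : Fin r → ℚ) ∈ K ∧
    (∀ x' ∈ K, ∀ x'' ∈ K, (fun i => max (x' i) (x'' i)) ∈ K) ∧
    ((∃! m, m ∈ K ∧ ∀ x ∈ K, m ≤ x → x = m) ↔ ∃ m ∈ K, ∀ x ∈ K, x ≤ m) := by
  subst hK
  have aux : ∀ (y z : Fin r → ℚ) (j : Fin r), (∀ i, y i ≤ z i) → y j = z j →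
      0 ≤ S.mulVec y j → 0 ≤ S.mulVec z j := by
    intro y z j hle hj hy
    refine hy.trans ?_
    simp only [mulVec, dotProduct]
    refine Finset.sum_le_sum fun i _ => ?_
    rcases eq_or_ne i j with rfl | hne
    · rw [hj]
    · exact mul_le_mul_of_nonneg_left (hle i) (hoff j i hne.symm)
  have hjoin : ∀ x' ∈ {x : Fin r → ℚ | (∀ i, 0 ≤ x i ∧ x i ≤ a i) ∧ ∀ j, 0 ≤ S.mulVec x j},
      ∀ x'' ∈ {x : Fin r → ℚ | (∀ i, 0 ≤ x i ∧ x i ≤ a i) ∧ ∀ j, 0 ≤ S.mulVec x j},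
      (fun i => max (x' i) (x'' i)) ∈
        {x : Fin r → ℚ | (∀ i, 0 ≤ x i ∧ x i ≤ a i) ∧ ∀ j, 0 ≤ S.mulVec x j} := by
    intro x' hx' x'' hx''
    refine ⟨fun i => ⟨le_max_of_le_left (hx'.1 i).1, max_le (hx'.1 i).2 (hx''.1 i).2⟩, ?_⟩
    intro j
    rcases le_total (x'' j) (x' j) with h | h
    · exact aux x' _ j (fun i => le_max_left _ _) (max_eq_left h).symm (hx'.2 j)
    · exact aux x'' _ j (fun i => le_max_right _ _) (max_eq_right h).symm (hx''.2 j)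
  refine ⟨⟨fun i => ⟨le_refl 0, (ha i).le⟩, fun j => by simp [mulVec]⟩, hjoin, ?_, ?_⟩
  · rintro ⟨m, ⟨hmK, hmax⟩, -⟩
    refine ⟨m, hmK, fun x hx => ?_⟩
    have hmem := hjoin x hx m hmK
    have heq := hmax _ hmem (fun i => le_max_right _ _)
    intro i
    have := congrFun heq i
    calc x i ≤ max (x i) (m i) := le_max_left _ _
      _ = m i := this
  · rintro ⟨m, hmK, hge⟩
    refine ⟨m, ⟨hmK, fun x hx hle => le_antisymm (hge x hx) hle⟩, ?_⟩
    rintro y ⟨hyK, hymax⟩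
    exact (hymax m hmK (hge y hyK)).symm
end
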